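/- arXiv:1005.4362 — 2 statements merged into one kernel-verified Lean document; each statement's English description precedes it below -/
import Mathlib

section
/- Let a > 0, μ_O, μ_I > 0 and fix η with ‖η‖ > a. The regular part h^{O,O}(ξ,η) = −(1/(2πμ_O)) ((μ_I−μ_O)/(μ_I+μ_O)) log( ‖ξ − (a²/‖η‖²)η‖ / ‖ξ‖ ) satisfies the asymptotic estimate: there is a constant C (depending on a, μ_O, μ_I) such that for all ‖ξ‖ ≥ 2a and ‖η‖ ≥ a, | h^{O,O}(ξ,η) + D^O(η) · ∇_ξ((1/(2πμ_O)) log(1/‖ξ‖)) | ≤ C / (‖ξ‖² (1+‖η‖)), where D^O(η) = ((μ_I−μ_O)/(μ_I+μ_O)) (a²/‖η‖²) η and ∇_ξ log(1/‖ξ‖) = −ξ/‖ξ‖². -/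
/-!
Write `η* = (a² / ‖η‖²) η` for the inversion of `η` in the circle of radius `a`, so
`‖η*‖ = a² / ‖η‖ ≤ a ≤ ‖ξ‖ / 2`. The quantity to bound is a constant multiple of
`log (‖ξ - η*‖ / ‖ξ‖) + ⟪η*, ξ⟫ / ‖ξ‖²`, the error of the first-order expansion of
`log ‖ξ - b‖` in `b` at `b = 0`. With `ρ = ‖ξ - η*‖ / ‖ξ‖`, the inner product equals
`(1 - ρ² + (‖η*‖/‖ξ‖)²) / 2`, so the error is `(log ρ² - (ρ² - 1)) / 2 + (‖η*‖/‖ξ‖)² / 2`,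
which is `O((‖η*‖/‖ξ‖)²)` because `|ρ - 1| ≤ ‖η*‖/‖ξ‖ ≤ 1/2`. Finally
`‖η*‖² = a⁴ / ‖η‖² ≤ a² (1 + a) / (1 + ‖η‖)`.
-/

open Real EuclideanGeometry

lemma abs_log_sub_sub_one_le {x : ℝ} (hx : 0 < x) : |log x - (x - 1)| ≤ (x - 1) ^ 2 / x := by
  have upper := log_le_sub_one_of_pos hx
  have lower := one_sub_inv_le_log_of_pos hx
  rw [abs_sub_comm, abs_of_nonneg (by linarith)]
  calc x - 1 - log x ≤ x - 1 - (1 - x⁻¹) := by linarith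
    _ = (x - 1) ^ 2 / x := by field_simp

lemma abs_log_sq_sub_le {ρ β : ℝ} (hρ : |ρ - 1| ≤ β) (hβ : β ≤ 1 / 2) :
    |log (ρ ^ 2) - (ρ ^ 2 - 1)| ≤ 25 * β ^ 2 := by
  rw [abs_le] at hρ
  have hρ2 : 1 / 4 ≤ ρ ^ 2 := by nlinarith
  refine (abs_log_sub_sub_one_le (by linarith)).trans ?_
  rw [div_le_iff₀ (by linarith)]
  have : (ρ ^ 2 - 1) ^ 2 ≤ β ^ 2 * (2 + β) ^ 2 := by
    rw [← mul_pow, sq_le_sq, abs_of_nonneg (by nlinarith : 0 ≤ β * (2 + β)), abs_le]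
    constructor <;> nlinarith
  nlinarith

lemma sq_sq_div_le_div_one_add {a m : ℝ} (ha : 0 < a) (hm : a ≤ m) :
    (a ^ 2 / m) ^ 2 ≤ a ^ 2 * (1 + a) / (1 + m) := by
  have hm0 := ha.trans_le hm
  rw [div_pow, div_le_div_iff₀ (by positivity) (by positivity)]
  calc (a ^ 2) ^ 2 * (1 + m) = a ^ 3 * (a * (1 + m)) := by ring
    _ ≤ a ^ 3 * ((1 + a) * m) := by gcongr ?_ * ?_; linarith
    _ = a ^ 2 * (1 + a) * (a * m) := by ring
    _ ≤ a ^ 2 * (1 + a) * m ^ 2 := by rw [sq m]; gcongr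

section InnerProductSpace

variable {E : Type*} [NormedAddCommGroup E] [InnerProductSpace ℝ E]

theorem abs_log_norm_sub_div_norm_add_inner_div_le {x b : E} (h : 2 * ‖b‖ ≤ ‖x‖) :
    |log (‖x - b‖ / ‖x‖) + inner ℝ b x / ‖x‖ ^ 2| ≤ 13 * (‖b‖ / ‖x‖) ^ 2 := by
  rcases (norm_nonneg x).eq_or_lt with hx | hx
  · rw [← hx]; simp
  have hratio : |‖x - b‖ / ‖x‖ - 1| ≤ ‖b‖ / ‖x‖ := by
    rw [div_sub_one hx.ne', abs_div, abs_norm, div_le_div_iff_of_pos_right hx]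
    simpa using abs_norm_sub_norm_le (x - b) x
  have hsmall : ‖b‖ / ‖x‖ ≤ 1 / 2 := by
    rw [div_le_iff₀ hx]; linarith
  have hlog : log (‖x - b‖ / ‖x‖) = log ((‖x - b‖ / ‖x‖) ^ 2) / 2 := by
    rw [log_pow]; push_cast; ring
  have hinner : inner ℝ b x / ‖x‖ ^ 2
      = -((‖x - b‖ / ‖x‖) ^ 2 - 1) / 2 + (‖b‖ / ‖x‖) ^ 2 / 2 := by
    rw [real_inner_comm]
    field_simp
    linarith [norm_sub_sq_real x b]
  have key := abs_log_sq_sub_le hratio hsmall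
  rw [hlog, hinner]
  calc _ = |(log ((‖x - b‖ / ‖x‖) ^ 2) - ((‖x - b‖ / ‖x‖) ^ 2 - 1)) / 2
          + (‖b‖ / ‖x‖) ^ 2 / 2| := by ring_nf
    _ ≤ |log ((‖x - b‖ / ‖x‖) ^ 2) - ((‖x - b‖ / ‖x‖) ^ 2 - 1)| / 2
          + (‖b‖ / ‖x‖) ^ 2 / 2 := by
        refine (abs_add_le _ _).trans ?_
        rw [abs_div, abs_two, abs_of_nonneg (by positivity : (0 : ℝ) ≤ (‖b‖ / ‖x‖) ^ 2 / 2)]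
    _ ≤ 13 * (‖b‖ / ‖x‖) ^ 2 := by linarith

lemma inversion_zero_eq_smul (a : ℝ) (η : E) :
    inversion (0 : E) a η = (a ^ 2 / ‖η‖ ^ 2) • η := by
  simp [inversion, div_pow]

lemma norm_inversion_zero (a : ℝ) (η : E) : ‖inversion (0 : E) a η‖ = a ^ 2 / ‖η‖ := by
  simpa using dist_inversion_center (0 : E) η a

lemma norm_inversion_zero_le {a : ℝ} {η : E} (ha : 0 < a) (hη : a ≤ ‖η‖) :
    ‖inversion (0 : E) a η‖ ≤ a := by
  rw [norm_inversion_zero, div_le_iff₀ (ha.trans_le hη)]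
  nlinarith

end InnerProductSpace

theorem stmt11_general (a μO μI : ℝ) (ha : 0 < a) :
    ∃ C : ℝ, 0 < C ∧ ∀ ξ η : EuclideanSpace ℝ (Fin 2), 2 * a ≤ ‖ξ‖ → a ≤ ‖η‖ →
      |(-(1 / (2 * π * μO)) * ((μI - μO) / (μI + μO)) *
            Real.log (‖ξ - (a ^ 2 / ‖η‖ ^ 2) • η‖ / ‖ξ‖))
          + (inner ℝ ((((μI - μO) / (μI + μO)) * (a ^ 2 / ‖η‖ ^ 2)) • η)
              ((-(1 / (2 * π * μO)) / ‖ξ‖ ^ 2) • ξ) : ℝ)|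
        ≤ C / (‖ξ‖ ^ 2 * (1 + ‖η‖)) := by
  set k := 1 / (2 * π * μO) * ((μI - μO) / (μI + μO))
  refine ⟨13 * |k| * (a ^ 2 * (1 + a)) + 1, by positivity, fun ξ η hξ hη => ?_⟩
  set b := inversion (0 : EuclideanSpace ℝ (Fin 2)) a η
  have hb : b = (a ^ 2 / ‖η‖ ^ 2) • η := inversion_zero_eq_smul a η
  have hexpansion := abs_log_norm_sub_div_norm_add_inner_div_le
    (x := ξ) (b := b) (by linarith [norm_inversion_zero_le ha hη])
  have hb_sq : ‖b‖ ^ 2 ≤ a ^ 2 * (1 + a) / (1 + ‖η‖) :=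
    norm_inversion_zero a η ▸ sq_sq_div_le_div_one_add ha hη
  rw [← hb]
  calc _ = |k| * |log (‖ξ - b‖ / ‖ξ‖) + inner ℝ b ξ / ‖ξ‖ ^ 2| := by
        rw [← abs_mul, ← abs_neg]
        simp only [hb, inner_smul_left, inner_smul_right, RCLike.conj_to_real, k]
        ring_nf
    _ ≤ |k| * (13 * (‖b‖ ^ 2 / ‖ξ‖ ^ 2)) := by
        rw [← div_pow]; exact mul_le_mul_of_nonneg_left hexpansion (abs_nonneg k)
    _ ≤ |k| * (13 * (a ^ 2 * (1 + a) / (1 + ‖η‖) / ‖ξ‖ ^ 2)) := by gcongr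
    _ = 13 * |k| * (a ^ 2 * (1 + a)) / (‖ξ‖ ^ 2 * (1 + ‖η‖)) := by
        rw [div_div]; ring
    _ ≤ _ := by gcongr; linarith

/-- Far-field dipole expansion of the regular part `h^{O,O}` of the transmission
Green's function for a circular inclusion: there is `C > 0` (depending on `a, μO, μI`)
such that for `‖ξ‖ ≥ 2a`, `‖η‖ ≥ a`,
`| h^{O,O}(ξ,η) + D^O(η)·∇_ξ((1/(2πμO)) log(1/‖ξ‖)) | ≤ C/(‖ξ‖²(1+‖η‖))`,
where `∇_ξ log(1/‖ξ‖) = −ξ/‖ξ‖²`. -/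
theorem stmt11 (a μO μI : ℝ) (ha : 0 < a) (hμO : 0 < μO) (hμI : 0 < μI) :
    ∃ C : ℝ, 0 < C ∧ ∀ ξ η : EuclideanSpace ℝ (Fin 2), 2 * a ≤ ‖ξ‖ → a ≤ ‖η‖ →
      |(-(1 / (2 * π * μO)) * ((μI - μO) / (μI + μO)) *
            Real.log (‖ξ - (a ^ 2 / ‖η‖ ^ 2) • η‖ / ‖ξ‖))
          + (inner ℝ ((((μI - μO) / (μI + μO)) * (a ^ 2 / ‖η‖ ^ 2)) • η)
              ((-(1 / (2 * π * μO)) / ‖ξ‖ ^ 2) • ξ) : ℝ)|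
        ≤ C / (‖ξ‖ ^ 2 * (1 + ‖η‖)) :=
  stmt11_general a μO μI ha
end

section
/- Let a > 0, μ_O, μ_I > 0, κ = (μ_I−μ_O)/(μ_I+μ_O), and fix η with ‖η‖ > a. With N^O, N^I as the exterior and interior branches of the transmission Green's function for the disk of radius a (N^O(ξ) = −(1/(2πμ_O))log‖ξ−η‖ + (κ/(2πμ_O)) log(‖ξ−(a²/‖η‖²)η‖/‖ξ‖), N^I(ξ) = −((1−κ)/(2πμ_O)) log‖ξ−η‖ − (κ/(2πμ_O)) log‖η‖), the normal-derivative transmission condition holds: for every ξ with ‖ξ‖ = a, μ_O (ξ/a)·∇N^O(ξ) = μ_I (ξ/a)·∇N^I(ξ), where ∇N^O is computed from the exterior formula and ∇N^I from the interior formula. -/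
/-!
On the circle `‖ξ‖ = a` the inversion `η* = (a² / ‖η‖²) • η` of the source satisfies
`‖ξ - η*‖ = (a / ‖η‖) ‖ξ - η‖`, so the radial derivative of the image term
`log (‖ξ - η*‖ / ‖ξ‖)` is minus that of the source term `log ‖ξ - η‖`. Both tractions are
therefore multiples of the radial derivative of `log ‖ξ - η‖`, with coefficients
`-(1 + κ) / 2π` and `-μI (1 - κ) / (2π μO)`, and these agree because
`μO (1 + κ) = μI (1 - κ) = 2 μI μO / (μI + μO)`.
-/

open Real

section InnerProductSpace

open scoped RealInnerProductSpace

variable {F : Type*} [NormedAddCommGroup F] [InnerProductSpace ℝ F]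

theorem hasFDerivAt_log_norm_sub {c ξ : F} (h : ξ ≠ c) :
    HasFDerivAt (fun z => log ‖z - c‖) ((‖ξ - c‖ ^ 2)⁻¹ • innerSL ℝ (ξ - c)) ξ := by
  have hsq : ‖ξ - c‖ ^ 2 ≠ 0 := by simpa [sub_eq_zero] using h
  have hlog := (((hasFDerivAt_id ξ).sub_const c).norm_sq.log hsq).const_mul (1 / 2 : ℝ)
  have hhalf_log : (fun z : F => 1 / 2 * log (‖id z - c‖ ^ 2)) = fun z => log ‖z - c‖ := by
    funext z
    rw [id, Real.log_pow]
    push_cast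
    ring
  rw [hhalf_log] at hlog
  refine hlog.congr_fderiv ?_
  ext v
  simp only [id_eq, ContinuousLinearMap.comp_id, smul_apply, coe_innerSL_apply, nsmul_eq_mul,
    smul_eq_mul]
  ring

theorem hasFDerivAt_log_norm_sub_div_norm {c ξ : F} (hc : ξ ≠ c) (h0 : ξ ≠ 0) :
    HasFDerivAt (fun z => log (‖z - c‖ / ‖z‖))
      ((‖ξ - c‖ ^ 2)⁻¹ • innerSL ℝ (ξ - c) - (‖ξ‖ ^ 2)⁻¹ • innerSL ℝ ξ) ξ := by
  have hlog_norm : HasFDerivAt (fun z : F => log ‖z‖) ((‖ξ‖ ^ 2)⁻¹ • innerSL ℝ ξ) ξ := by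
    simpa using hasFDerivAt_log_norm_sub (c := 0) h0
  have hlog_div : (fun z : F => log ‖z - c‖ - log ‖z‖) =ᶠ[nhds ξ]
      fun z => log (‖z - c‖ / ‖z‖) := by
    filter_upwards [isOpen_ne.mem_nhds hc, isOpen_ne.mem_nhds h0] with z hzc hz0
    rw [Real.log_div (by simpa [sub_eq_zero] using hzc) (by simpa using hz0)]
  exact ((hasFDerivAt_log_norm_sub hc).sub hlog_norm).congr_of_eventuallyEq hlog_div.symm

theorem norm_sub_inversion_sq {a : ℝ} {ξ η : F} (hξ : ‖ξ‖ = a) (hη : η ≠ 0) :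
    ‖ξ - (a ^ 2 / ‖η‖ ^ 2) • η‖ ^ 2 = a ^ 2 / ‖η‖ ^ 2 * ‖ξ - η‖ ^ 2 := by
  have hr : ‖η‖ ≠ 0 := norm_ne_zero_iff.mpr hη
  rw [norm_sub_sq_real, norm_sub_sq_real, norm_smul, real_inner_smul_right, hξ,
    Real.norm_eq_abs, abs_of_nonneg (by positivity)]
  field_simp
  ring

theorem ne_inversion_of_norm_eq {a : ℝ} {ξ η : F} (hξ : ‖ξ‖ = a) (ha : a ≠ 0) (hη : η ≠ 0)
    (hξη : ξ ≠ η) : ξ ≠ (a ^ 2 / ‖η‖ ^ 2) • η := by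
  have hd : ‖ξ - η‖ ≠ 0 := norm_ne_zero_iff.mpr (sub_ne_zero.mpr hξη)
  have hr : ‖η‖ ≠ 0 := norm_ne_zero_iff.mpr hη
  rw [← sub_ne_zero, ← norm_ne_zero_iff, ← pow_ne_zero_iff two_ne_zero,
    norm_sub_inversion_sq hξ hη]
  positivity

theorem inner_sub_inversion_div_norm_sq_sub_one {a : ℝ} {ξ η : F} (hξ : ‖ξ‖ = a) (ha : a ≠ 0)
    (hη : η ≠ 0) (hξη : ξ ≠ η) :
    ⟪ξ - (a ^ 2 / ‖η‖ ^ 2) • η, ξ⟫ / ‖ξ - (a ^ 2 / ‖η‖ ^ 2) • η‖ ^ 2 - 1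
      = -(⟪ξ - η, ξ⟫ / ‖ξ - η‖ ^ 2) := by
  have hη0 : ‖η‖ ≠ 0 := norm_ne_zero_iff.mpr hη
  have hd : ‖ξ - η‖ ≠ 0 := norm_ne_zero_iff.mpr (sub_ne_zero.mpr hξη)
  have hd_sq : ‖ξ - η‖ ^ 2 = a ^ 2 + ‖η‖ ^ 2 - 2 * ⟪η, ξ⟫ := by
    rw [norm_sub_sq_real, hξ, real_inner_comm]
    ring
  rw [norm_sub_inversion_sq hξ hη, inner_sub_left, inner_sub_left, real_inner_smul_left,
    real_inner_self_eq_norm_sq, hξ]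
  field_simp
  rw [hd_sq]
  ring

theorem radial_deriv_log_image_eq_neg {a : ℝ} {ξ η : F} (hξ : ‖ξ‖ = a) (ha : a ≠ 0)
    (hη : η ≠ 0) (hξη : ξ ≠ η) (r : ℝ) :
    ((‖ξ - (a ^ 2 / ‖η‖ ^ 2) • η‖ ^ 2)⁻¹ • innerSL ℝ (ξ - (a ^ 2 / ‖η‖ ^ 2) • η)
        - (‖ξ‖ ^ 2)⁻¹ • innerSL ℝ ξ) (r • ξ)
      = -(((‖ξ - η‖ ^ 2)⁻¹ • innerSL ℝ (ξ - η)) (r • ξ)) := by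
  have hunit : (‖ξ‖ ^ 2)⁻¹ * ‖ξ‖ ^ 2 = 1 := inv_mul_cancel₀ (by simp [hξ, ha])
  simp only [sub_apply, smul_apply, innerSL_apply_apply, real_inner_smul_right,
    real_inner_self_eq_norm_sq, smul_eq_mul]
  linear_combination r * inner_sub_inversion_div_norm_sq_sub_one hξ ha hη hξη - r * hunit

end InnerProductSpace

theorem mul_one_add_div_eq_mul_one_sub_div {μO μI : ℝ} (hμ : μI + μO ≠ 0) :
    μO * (1 + (μI - μO) / (μI + μO)) = μI * (1 - (μI - μO) / (μI + μO)) := by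
  field_simp
  ring

/-- Traction continuity of the transmission Green's function of a circular
inclusion of radius `a` with source `η` outside: with `κ = (μI−μO)/(μI+μO)`,
for `‖ξ‖ = a`, `μO (ξ/a)·∇N^O(ξ) = μI (ξ/a)·∇N^I(ξ)`, the gradients being
computed from the exterior resp. interior formulas. -/
theorem stmt16 (a μO μI : ℝ) (ha : 0 < a) (hμO : 0 < μO) (hμI : 0 < μI)
    (η : EuclideanSpace ℝ (Fin 2)) (hη : a < ‖η‖) :
    ∀ ξ : EuclideanSpace ℝ (Fin 2), ‖ξ‖ = a →
      μO * fderiv ℝ (fun z : EuclideanSpace ℝ (Fin 2) =>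
          -(1 / (2 * π * μO)) * Real.log ‖z - η‖
            + ((μI - μO) / (μI + μO)) / (2 * π * μO) *
              Real.log (‖z - (a ^ 2 / ‖η‖ ^ 2) • η‖ / ‖z‖)) ξ (a⁻¹ • ξ)
        = μI * fderiv ℝ (fun z : EuclideanSpace ℝ (Fin 2) =>
            -((1 - (μI - μO) / (μI + μO)) / (2 * π * μO)) * Real.log ‖z - η‖
              - ((μI - μO) / (μI + μO)) / (2 * π * μO) * Real.log ‖η‖) ξ (a⁻¹ • ξ) := by
  intro ξ hξ
  have hξ0 : ξ ≠ 0 := by rintro rfl; simp [ha.ne] at hξ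
  have hξη : ξ ≠ η := by rintro rfl; exact hη.ne hξ.symm
  have hη0 : η ≠ 0 := by rintro rfl; simp [ha.le.not_gt] at hη
  set κ := (μI - μO) / (μI + μO)
  have hO := ((hasFDerivAt_log_norm_sub hξη).const_mul (-(1 / (2 * π * μO)))).fun_add
    ((hasFDerivAt_log_norm_sub_div_norm (ne_inversion_of_norm_eq hξ ha.ne' hη0 hξη)
      hξ0).const_mul (κ / (2 * π * μO)))
  have hI := ((hasFDerivAt_log_norm_sub hξη).const_mul
    (-((1 - κ) / (2 * π * μO)))).sub_const (κ / (2 * π * μO) * log ‖η‖)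
  have htraction : ∀ X : ℝ, μO * (-(1 / (2 * π * μO)) * X + κ / (2 * π * μO) * -X)
      = μI * (-((1 - κ) / (2 * π * μO)) * X) := by
    have hcoef : μO * (1 + κ) = μI * (1 - κ) := mul_one_add_div_eq_mul_one_sub_div (by positivity)
    clear_value κ
    intro X
    field_simp
    linear_combination (-X) * hcoef
  rw [hO.fderiv, hI.fderiv]
  simp only [add_apply, smul_apply, radial_deriv_log_image_eq_neg hξ ha.ne' hη0 hξη,
    smul_eq_mul]
  exact htraction _
end
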